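/- Under the hypotheses of the splitting lemma — A δxⁱ = 0, Aᵀ δλⁱ + δsⁱ = 0 for i = 1,2,3, with right-hand sides s ∘ δx¹ + x ∘ δs¹ = x ∘ s, s ∘ δx² + x ∘ δs² = −ν · s ∘ (x⁰ − x̄), s ∘ δx³ + x ∘ δs³ = −ν · x ∘ (s⁰ − s̄), and ẋ = δx¹ + δx² + δx³ + ν(x⁰ − x̄), ṡ = δs¹ + δs² + δs³ + ν(s⁰ − s̄) — assume in addition that ν > 0, β > 0, and x_i ≥ β ν, s_i ≥ β ν for every i. Then ‖D ṡ‖ ≤ (1 + (‖x⁰ − x̄‖ + ‖s⁰ − s̄‖)/β) · √(n μ) and ‖D⁻¹ ẋ‖ ≤ (1 + (‖x⁰ − x̄‖ + ‖s⁰ − s̄‖)/β) · √(n μ), where μ = xᵀs/n. -/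
import Mathlib


open Matrix

/-- The Euclidean norm of a vector in `ℝⁿ`. -/
noncomputable def euclNorm {n : ℕ} (v : Fin n → ℝ) : ℝ :=
  Real.sqrt (∑ i, v i ^ 2)

/-- `D⁻¹ v`, where `D = diag(√(x_i/s_i))`. -/
noncomputable def dInvApp {n : ℕ} (x s v : Fin n → ℝ) : Fin n → ℝ :=
  fun i => Real.sqrt (s i / x i) * v i

/-- `D v`, where `D = diag(√(x_i/s_i))`. -/
noncomputable def dApp {n : ℕ} (x s v : Fin n → ℝ) : Fin n → ℝ :=
  fun i => Real.sqrt (x i / s i) * v i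

lemma euclNorm_nonneg {n : ℕ} (v : Fin n → ℝ) : 0 ≤ euclNorm v := Real.sqrt_nonneg _

lemma euclNorm_eq_norm {n : ℕ} (v : Fin n → ℝ) :
    euclNorm v = ‖(WithLp.equiv 2 (Fin n → ℝ)).symm v‖ := by
  rw [EuclideanSpace.norm_eq]
  simp [euclNorm, Real.norm_eq_abs, sq_abs]

lemma euclNorm_add_le {n : ℕ} (u v : Fin n → ℝ) :
    euclNorm (fun i => u i + v i) ≤ euclNorm u + euclNorm v := by
  rw [euclNorm_eq_norm, euclNorm_eq_norm, euclNorm_eq_norm]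
  exact norm_add_le ((WithLp.equiv 2 (Fin n → ℝ)).symm u) ((WithLp.equiv 2 (Fin n → ℝ)).symm v)

lemma euclNorm_neg {n : ℕ} (v : Fin n → ℝ) : euclNorm (fun i => -(v i)) = euclNorm v := by
  simp [euclNorm]

lemma euclNorm_right_le {n : ℕ} (u v : Fin n → ℝ) (h : ∑ i, u i * v i = 0) :
    euclNorm v ≤ euclNorm (fun i => u i + v i) := by
  unfold euclNorm
  apply Real.sqrt_le_sqrt
  have h2 : ∑ i, (u i + v i) ^ 2
      = (∑ i, u i ^ 2) + 2 * (∑ i, u i * v i) + ∑ i, v i ^ 2 := by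
    rw [Finset.mul_sum, ← Finset.sum_add_distrib, ← Finset.sum_add_distrib]
    exact Finset.sum_congr rfl fun i _ => by ring
  have h3 : 0 ≤ ∑ i, u i ^ 2 := Finset.sum_nonneg fun i _ => sq_nonneg _
  rw [h2, h]
  linarith

lemma euclNorm_left_le {n : ℕ} (u v : Fin n → ℝ) (h : ∑ i, u i * v i = 0) :
    euclNorm u ≤ euclNorm (fun i => u i + v i) := by
  have := euclNorm_right_le v u (by rw [← h]; exact Finset.sum_congr rfl fun i _ => mul_comm _ _)
  simpa [add_comm] using this

lemma euclNorm_le_mul {n : ℕ} (K : ℝ) (hK : 0 ≤ K) (v w : Fin n → ℝ)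
    (h : ∀ i, v i ^ 2 ≤ K ^ 2 * w i ^ 2) : euclNorm v ≤ K * euclNorm w := by
  unfold euclNorm
  calc Real.sqrt (∑ i, v i ^ 2) ≤ Real.sqrt (∑ i, K ^ 2 * w i ^ 2) :=
        Real.sqrt_le_sqrt (Finset.sum_le_sum fun i _ => h i)
    _ = K * Real.sqrt (∑ i, w i ^ 2) := by
        rw [← Finset.mul_sum, Real.sqrt_mul (sq_nonneg K), Real.sqrt_sq hK]

lemma bound_aux (t β ν p q w g : ℝ) (hp : 0 < p) (hq : 0 < q) (hβ : 0 < β) (hν : 0 < ν)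
    (hl : β * ν ≤ p) (ht : p * q ≤ t) (hg : g ^ 2 = p * q) :
    (-(ν * (q * w)) / g) ^ 2 ≤ (Real.sqrt t / β) ^ 2 * w ^ 2 := by
  have ht0 : 0 ≤ t := le_trans (by positivity) ht
  rw [div_pow, div_pow, Real.sq_sqrt ht0, hg, div_mul_eq_mul_div,
    div_le_div_iff₀ (by positivity) (by positivity)]
  have h1 : ν ^ 2 * β ^ 2 ≤ p ^ 2 := by nlinarith [mul_le_mul hl hl (by positivity : (0:ℝ) ≤ β * ν) hp.le]
  nlinarith [mul_le_mul_of_nonneg_right h1 (mul_nonneg (sq_nonneg q) (sq_nonneg w)),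
    mul_le_mul_of_nonneg_right ht (mul_nonneg (mul_nonneg hp.le hq.le) (sq_nonneg w))]

/-- Lemma 4.4: under the splitting hypotheses and the lower bounds
`x_i ≥ βν`, `s_i ≥ βν`, the Newton direction satisfies
`‖Dṡ‖, ‖D⁻¹ẋ‖ ≤ (1 + (‖x⁰−x̄‖ + ‖s⁰−s̄‖)/β) √(nμ)`. -/
theorem newton_direction_C2_bound {m n : ℕ}
    (A : Matrix (Fin m) (Fin n) ℝ)
    (x s : Fin n → ℝ) (hx : ∀ i, 0 < x i) (hs : ∀ i, 0 < s i)
    (μ ν β : ℝ) (hμ : μ = x ⬝ᵥ s / n) (hν : 0 < ν) (hβ : 0 < β)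
    (hxl : ∀ i, β * ν ≤ x i) (hsl : ∀ i, β * ν ≤ s i)
    (x0 s0 xbar sbar : Fin n → ℝ) (l0 lbar : Fin m → ℝ)
    (dx1 dx2 dx3 ds1 ds2 ds3 : Fin n → ℝ) (dl1 dl2 dl3 : Fin m → ℝ)
    (hA1 : A.mulVec dx1 = 0) (hA2 : A.mulVec dx2 = 0) (hA3 : A.mulVec dx3 = 0)
    (hB1 : Aᵀ.mulVec dl1 + ds1 = 0) (hB2 : Aᵀ.mulVec dl2 + ds2 = 0)
    (hB3 : Aᵀ.mulVec dl3 + ds3 = 0)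
    (hr1 : ∀ i, s i * dx1 i + x i * ds1 i = x i * s i)
    (hr2 : ∀ i, s i * dx2 i + x i * ds2 i = -(ν * (s i * (x0 i - xbar i))))
    (hr3 : ∀ i, s i * dx3 i + x i * ds3 i = -(ν * (x i * (s0 i - sbar i))))
    (xd sd : Fin n → ℝ)
    (hxd : xd = dx1 + dx2 + dx3 + ν • (x0 - xbar))
    (hsd : sd = ds1 + ds2 + ds3 + ν • (s0 - sbar)) :
    euclNorm (dApp x s sd) ≤
      (1 + (euclNorm (x0 - xbar) + euclNorm (s0 - sbar)) / β) * Real.sqrt (n * μ) ∧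
    euclNorm (dInvApp x s xd) ≤
      (1 + (euclNorm (x0 - xbar) + euclNorm (s0 - sbar)) / β) * Real.sqrt (n * μ) := by
  by_cases hn : n = 0
  · subst hn
    constructor <;> simp [euclNorm]
  have hxs : ∀ i, 0 < x i * s i := fun i => mul_pos (hx i) (hs i)
  set g : Fin n → ℝ := fun i => Real.sqrt (x i * s i) with hgdef
  have hgpos : ∀ i, 0 < g i := fun i => Real.sqrt_pos.mpr (hxs i)
  have hgsq : ∀ i, g i ^ 2 = x i * s i := fun i => Real.sq_sqrt (hxs i).le
  have hnμ : (n : ℝ) * μ = ∑ i, x i * s i := by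
    rw [hμ]
    have hn' : (n : ℝ) ≠ 0 := Nat.cast_ne_zero.mpr hn
    field_simp
    rfl
  have hμnn : 0 ≤ (n : ℝ) * μ := by
    rw [hnμ]; exact Finset.sum_nonneg fun i _ => (hxs i).le
  have hxsle : ∀ i, x i * s i ≤ (n : ℝ) * μ := by
    intro i
    rw [hnμ]
    exact Finset.single_le_sum (fun j _ => (hxs j).le) (Finset.mem_univ i)
  set t : ℝ := (n : ℝ) * μ with htdef
  set K : ℝ := Real.sqrt t / β with hKdef
  have hK0 : 0 ≤ K := div_nonneg (Real.sqrt_nonneg _) hβ.le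
  -- sqrt identities
  have e1 : ∀ i, Real.sqrt (s i / x i) * g i = s i := by
    intro i
    rw [hgdef, ← Real.sqrt_mul (div_nonneg (hs i).le (hx i).le)]
    rw [show s i / x i * (x i * s i) = s i ^ 2 by
      field_simp [(hx i).ne']]
    exact Real.sqrt_sq (hs i).le
  have e2 : ∀ i, Real.sqrt (x i / s i) * g i = x i := by
    intro i
    rw [hgdef, ← Real.sqrt_mul (div_nonneg (hx i).le (hs i).le)]
    rw [show x i / s i * (x i * s i) = x i ^ 2 by
      field_simp [(hs i).ne']]
    exact Real.sqrt_sq (hx i).le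
  -- orthogonality of each scaled pair
  have horth : ∀ (dxk dsk : Fin n → ℝ) (dlk : Fin m → ℝ),
      A.mulVec dxk = 0 → Aᵀ.mulVec dlk + dsk = 0 →
      ∑ i, dInvApp x s dxk i * dApp x s dsk i = 0 := by
    intro dxk dsk dlk h1 h2
    have hds : dsk = -(Aᵀ.mulVec dlk) := by
      have := congrArg (fun v => v - Aᵀ.mulVec dlk) h2
      simpa [add_sub_cancel_left, sub_eq_iff_eq_add] using this
    have hdot : dxk ⬝ᵥ dsk = 0 := by
      rw [hds, dotProduct_neg, Matrix.dotProduct_mulVec, Matrix.vecMul_transpose, h1,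
        zero_dotProduct, neg_zero]
    calc ∑ i, dInvApp x s dxk i * dApp x s dsk i = ∑ i, dxk i * dsk i := by
          refine Finset.sum_congr rfl fun i _ => ?_
          have hone : Real.sqrt (s i / x i) * Real.sqrt (x i / s i) = 1 := by
            rw [← Real.sqrt_mul (div_nonneg (hs i).le (hx i).le)]
            rw [show s i / x i * (x i / s i) = 1 by field_simp [(hx i).ne', (hs i).ne']]
            exact Real.sqrt_one
          simp only [dInvApp, dApp]
          calc Real.sqrt (s i / x i) * dxk i * (Real.sqrt (x i / s i) * dsk i)
              = Real.sqrt (s i / x i) * Real.sqrt (x i / s i) * (dxk i * dsk i) := by ring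
            _ = dxk i * dsk i := by rw [hone, one_mul]
      _ = 0 := hdot
  -- pair-sum identity
  have hpair : ∀ (dxk dsk r : Fin n → ℝ), (∀ i, s i * dxk i + x i * dsk i = r i) →
      ∀ i, dInvApp x s dxk i + dApp x s dsk i = r i / g i := by
    intro dxk dsk r hr i
    apply mul_right_cancel₀ (hgpos i).ne'
    rw [div_mul_cancel₀ _ (hgpos i).ne']
    calc (dInvApp x s dxk i + dApp x s dsk i) * g i
        = Real.sqrt (s i / x i) * g i * dxk i + Real.sqrt (x i / s i) * g i * dsk i := by
          simp only [dInvApp, dApp]; ring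
      _ = s i * dxk i + x i * dsk i := by rw [e1 i, e2 i]
      _ = r i := hr i
  -- the three pair sums
  have hp1 : ∀ i, dInvApp x s dx1 i + dApp x s ds1 i = (x i * s i) / g i :=
    hpair dx1 ds1 (fun i => x i * s i) hr1
  have hp2 : ∀ i, dInvApp x s dx2 i + dApp x s ds2 i
      = (-(ν * (s i * (x0 i - xbar i)))) / g i :=
    hpair dx2 ds2 (fun i => -(ν * (s i * (x0 i - xbar i)))) hr2
  have hp3 : ∀ i, dInvApp x s dx3 i + dApp x s ds3 i
      = (-(ν * (x i * (s0 i - sbar i)))) / g i :=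
    hpair dx3 ds3 (fun i => -(ν * (x i * (s0 i - sbar i)))) hr3
  -- norm of the first pair sum
  have n1 : euclNorm (fun i => (x i * s i) / g i) = Real.sqrt t := by
    unfold euclNorm
    rw [hnμ]
    congr 1
    refine Finset.sum_congr rfl fun i _ => ?_
    show (x i * s i / Real.sqrt (x i * s i)) ^ 2 = x i * s i
    rw [Real.div_sqrt]
    exact Real.sq_sqrt (hxs i).le
  -- norms of the second and third pair sums
  have n2 : euclNorm (fun i => (-(ν * (s i * (x0 i - xbar i)))) / g i)
      ≤ K * euclNorm (x0 - xbar) := by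
    refine euclNorm_le_mul K hK0 _ _ fun i => ?_
    have := bound_aux t β ν (x i) (s i) (x0 i - xbar i) (g i) (hx i) (hs i) hβ hν
      (hxl i) (hxsle i) (hgsq i)
    simpa [Pi.sub_apply, hKdef] using this
  have n3 : euclNorm (fun i => (-(ν * (x i * (s0 i - sbar i)))) / g i)
      ≤ K * euclNorm (s0 - sbar) := by
    refine euclNorm_le_mul K hK0 _ _ fun i => ?_
    have := bound_aux t β ν (s i) (x i) (s0 i - sbar i) (g i) (hs i) (hx i) hβ hν
      (hsl i) (le_of_eq_of_le (mul_comm _ _) (hxsle i)) (by rw [hgsq i, mul_comm])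
    simpa [Pi.sub_apply, hKdef] using this
  -- orthogonality instances
  have o1 := horth dx1 ds1 dl1 hA1 hB1
  have o2 := horth dx2 ds2 dl2 hA2 hB2
  have o3 := horth dx3 ds3 dl3 hA3 hB3
  -- bounds on the individual scaled directions
  have b1s : euclNorm (dApp x s ds1) ≤ Real.sqrt t := by
    have h := euclNorm_right_le (dInvApp x s dx1) (dApp x s ds1) o1
    rwa [show (fun i => dInvApp x s dx1 i + dApp x s ds1 i)
      = fun i => (x i * s i) / g i from funext hp1, n1] at h
  have b1x : euclNorm (dInvApp x s dx1) ≤ Real.sqrt t := by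
    have h := euclNorm_left_le (dInvApp x s dx1) (dApp x s ds1) o1
    rwa [show (fun i => dInvApp x s dx1 i + dApp x s ds1 i)
      = fun i => (x i * s i) / g i from funext hp1, n1] at h
  have b2s : euclNorm (dApp x s ds2) ≤ K * euclNorm (x0 - xbar) := by
    have h := euclNorm_right_le (dInvApp x s dx2) (dApp x s ds2) o2
    rw [show (fun i => dInvApp x s dx2 i + dApp x s ds2 i)
      = fun i => (-(ν * (s i * (x0 i - xbar i)))) / g i from funext hp2] at h
    exact h.trans n2
  have b3x : euclNorm (dInvApp x s dx3) ≤ K * euclNorm (s0 - sbar) := by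
    have h := euclNorm_left_le (dInvApp x s dx3) (dApp x s ds3) o3
    rw [show (fun i => dInvApp x s dx3 i + dApp x s ds3 i)
      = fun i => (-(ν * (x i * (s0 i - sbar i)))) / g i from funext hp3] at h
    exact h.trans n3
  -- decomposition identities
  have keyS : dApp x s sd = fun i => dApp x s ds1 i + (dApp x s ds2 i + -(dInvApp x s dx3 i)) := by
    funext i
    have hsdi : sd i = ds1 i + ds2 i + ds3 i + ν * (s0 i - sbar i) := by
      rw [hsd]; simp [Pi.add_apply, Pi.smul_apply, Pi.sub_apply, smul_eq_mul]
    have hh : Real.sqrt (x i / s i) * (ds3 i + ν * (s0 i - sbar i))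
        = -(Real.sqrt (s i / x i) * dx3 i) := by
      apply mul_right_cancel₀ (hgpos i).ne'
      rw [show Real.sqrt (x i / s i) * (ds3 i + ν * (s0 i - sbar i)) * g i
        = Real.sqrt (x i / s i) * g i * (ds3 i + ν * (s0 i - sbar i)) from by ring,
        show -(Real.sqrt (s i / x i) * dx3 i) * g i
        = -(Real.sqrt (s i / x i) * g i * dx3 i) from by ring, e1 i, e2 i]
      have := hr3 i
      ring_nf
      ring_nf at this
      linarith
    simp only [dApp, dInvApp] at hh ⊢
    rw [hsdi]
    calc Real.sqrt (x i / s i) * (ds1 i + ds2 i + ds3 i + ν * (s0 i - sbar i))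
        = Real.sqrt (x i / s i) * ds1 i + (Real.sqrt (x i / s i) * ds2 i
          + Real.sqrt (x i / s i) * (ds3 i + ν * (s0 i - sbar i))) := by ring
      _ = _ := by rw [hh]
  have keyX : dInvApp x s xd
      = fun i => dInvApp x s dx1 i + (-(dApp x s ds2 i) + dInvApp x s dx3 i) := by
    funext i
    have hxdi : xd i = dx1 i + dx2 i + dx3 i + ν * (x0 i - xbar i) := by
      rw [hxd]; simp [Pi.add_apply, Pi.smul_apply, Pi.sub_apply, smul_eq_mul]
    have hh : Real.sqrt (s i / x i) * (dx2 i + ν * (x0 i - xbar i))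
        = -(Real.sqrt (x i / s i) * ds2 i) := by
      apply mul_right_cancel₀ (hgpos i).ne'
      rw [show Real.sqrt (s i / x i) * (dx2 i + ν * (x0 i - xbar i)) * g i
        = Real.sqrt (s i / x i) * g i * (dx2 i + ν * (x0 i - xbar i)) from by ring,
        show -(Real.sqrt (x i / s i) * ds2 i) * g i
        = -(Real.sqrt (x i / s i) * g i * ds2 i) from by ring, e1 i, e2 i]
      have := hr2 i
      ring_nf
      ring_nf at this
      linarith
    simp only [dApp, dInvApp] at hh ⊢
    rw [hxdi]
    calc Real.sqrt (s i / x i) * (dx1 i + dx2 i + dx3 i + ν * (x0 i - xbar i))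
        = Real.sqrt (s i / x i) * dx1 i + (Real.sqrt (s i / x i) * (dx2 i + ν * (x0 i - xbar i))
          + Real.sqrt (s i / x i) * dx3 i) := by ring
      _ = _ := by rw [hh]
  -- arithmetic on the right-hand side
  have hRHS : (1 + (euclNorm (x0 - xbar) + euclNorm (s0 - sbar)) / β) * Real.sqrt t
      = Real.sqrt t + (K * euclNorm (x0 - xbar) + K * euclNorm (s0 - sbar)) := by
    rw [hKdef]; field_simp
  constructor
  · rw [keyS, hRHS]
    calc euclNorm (fun i => dApp x s ds1 i + (dApp x s ds2 i + -(dInvApp x s dx3 i)))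
        ≤ euclNorm (dApp x s ds1)
          + euclNorm (fun i => dApp x s ds2 i + -(dInvApp x s dx3 i)) :=
          euclNorm_add_le _ _
      _ ≤ euclNorm (dApp x s ds1)
          + (euclNorm (dApp x s ds2) + euclNorm (fun i => -(dInvApp x s dx3 i))) := by
          have := euclNorm_add_le (dApp x s ds2) (fun i => -(dInvApp x s dx3 i))
          linarith
      _ = euclNorm (dApp x s ds1)
          + (euclNorm (dApp x s ds2) + euclNorm (dInvApp x s dx3)) := by
          rw [euclNorm_neg]
      _ ≤ Real.sqrt t + (K * euclNorm (x0 - xbar) + K * euclNorm (s0 - sbar)) := by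
          have := b1s; have := b2s; have := b3x; linarith
  · rw [keyX, hRHS]
    calc euclNorm (fun i => dInvApp x s dx1 i + (-(dApp x s ds2 i) + dInvApp x s dx3 i))
        ≤ euclNorm (dInvApp x s dx1)
          + euclNorm (fun i => -(dApp x s ds2 i) + dInvApp x s dx3 i) :=
          euclNorm_add_le _ _
      _ ≤ euclNorm (dInvApp x s dx1)
          + (euclNorm (fun i => -(dApp x s ds2 i)) + euclNorm (dInvApp x s dx3)) := by
          have := euclNorm_add_le (fun i => -(dApp x s ds2 i)) (dInvApp x s dx3)
          linarith
      _ = euclNorm (dInvApp x s dx1)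
          + (euclNorm (dApp x s ds2) + euclNorm (dInvApp x s dx3)) := by
          rw [euclNorm_neg]
      _ ≤ Real.sqrt t + (K * euclNorm (x0 - xbar) + K * euclNorm (s0 - sbar)) := by
          have := b1x; have := b2s; have := b3x; linarith
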